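/- arXiv:2210.01906 — 3 statements merged into one kernel-verified Lean document; each statement's English description precedes it below -/
import Mathlib

section
/- Let X and Y be finite multisets of equal cardinality m in a metric space, and let 𝟘 be a distinguished element. Then for any n ≥ 0, the unnormalized optimal transport cost between X ∪ {𝟘}^n and Y ∪ {𝟘}^n (where {𝟘}^n denotes n copies of 𝟘) equals the unnormalized optimal transport cost between X and Y. -/
open scoped BigOperators

noncomputable section

/-- Unnormalized optimal transport between equal-cardinality multisets (represented
as lists): the minimum over bijective matchings of the summed ground costs. -/
noncomputable def listOT {α : Type*} (d : α → α → ℝ) (X Y : List α) : ℝ :=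
  sInf {c : ℝ | ∃ Y' : List α, Y.Perm Y' ∧ c = (List.zipWith d X Y').sum}

/-- Blank augmentation `ρ`: pad the smaller multiset with copies of the blank
element `b` so that both multisets have equal cardinality. -/
def pad {α : Type*} (b : α) (X Y : List α) : List α × List α :=
  (X ++ List.replicate (Y.length - X.length) b,
   Y ++ List.replicate (X.length - Y.length) b)

/-- Blank-augmented unnormalized optimal transport `OT_d(ρ(X, Y))`. -/
noncomputable def otPad {α : Type*} (d : α → α → ℝ) (b : α) (X Y : List α) : ℝ :=
  listOT d (pad b X Y).1 (pad b X Y).2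

namespace ListOT

open List

variable {α : Type*}

lemma costs_finite (d : α → α → ℝ) (X Y : List α) :
    {c : ℝ | ∃ Y' : List α, Y.Perm Y' ∧ c = (zipWith d X Y').sum}.Finite := by
  refine (Y.permutations.finite_toSet.image fun Y' => (zipWith d X Y').sum).subset ?_
  rintro c ⟨Y', hY', rfl⟩
  exact ⟨Y', mem_permutations.2 hY'.symm, rfl⟩

lemma listOT_le {d : α → α → ℝ} {X Y Y' : List α} (hY' : Y.Perm Y') :
    listOT d X Y ≤ (zipWith d X Y').sum :=
  csInf_le (costs_finite d X Y).bddBelow ⟨Y', hY', rfl⟩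

lemma le_listOT {d : α → α → ℝ} {X Y : List α} {c : ℝ}
    (h : ∀ Y', Y.Perm Y' → c ≤ (zipWith d X Y').sum) : c ≤ listOT d X Y :=
  le_csInf ⟨_, Y, Perm.refl Y, rfl⟩ fun _ ⟨Y', hY', hc⟩ => hc ▸ h Y' hY'

lemma sum_zipWith_append_singleton (d : α → α → ℝ) {X Y : List α}
    (hlen : X.length = Y.length) (x y : α) :
    (zipWith d (X ++ [x]) (Y ++ [y])).sum = (zipWith d X Y).sum + d x y := by
  simp [zipWith_append hlen]

lemma sum_zipWith_dist_append_cons_le [PseudoMetricSpace α] (b y : α) :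
    ∀ X A B : List α, (zipWith dist X (A ++ y :: B)).sum ≤
      (zipWith dist X (A ++ b :: B)).sum + dist b y
  | [], _, _ => by simp [dist_nonneg]
  | x :: X, [], B => by
    simpa [add_right_comm] using dist_triangle x b y
  | x :: X, a :: A, B => by
    simpa [add_assoc] using sum_zipWith_dist_append_cons_le b y X A B

/-- If the matching pairs the last `b` of `X ++ [b]` with `y`, drop that pair and give `y` to
the element of `X` that was matched with the `b` of `Y ++ [b]`: by the triangle inequality
through `b` this costs no more. -/
lemma exists_perm_sum_zipWith_dist_le [PseudoMetricSpace α] (b : α) {X Y Y'' : List α}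
    (hlen : X.length = Y.length) (hY'' : (Y ++ [b]).Perm Y'') :
    ∃ Y', Y.Perm Y' ∧ (zipWith dist X Y').sum ≤ (zipWith dist (X ++ [b]) Y'').sum := by
  obtain ⟨Y₀, y, rfl⟩ : ∃ Y₀ y, Y'' = Y₀ ++ [y] := by
    rcases eq_nil_or_concat' Y'' with rfl | h
    · simpa using hY''.length_eq
    · exact h
  have hlen₀ : X.length = Y₀.length := by simpa [hlen] using hY''.length_eq
  rw [sum_zipWith_append_singleton dist hlen₀]
  by_cases hyb : y = b
  · subst hyb
    exact ⟨Y₀, perm_append_right_iff _ |>.1 hY'', by simp⟩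
  · have hb : b ∈ Y₀ := by
      simpa [Ne.symm hyb] using hY''.subset (mem_append_right Y (mem_singleton_self b))
    obtain ⟨A, B, rfl⟩ := append_of_mem hb
    refine ⟨A ++ y :: B, ?_, sum_zipWith_dist_append_cons_le b y X A B⟩
    refine perm_append_right_iff [b] |>.1 (hY''.trans ?_)
    simp only [append_assoc, cons_append, perm_append_left_iff]
    exact ((perm_append_singleton y B).cons b).trans
      ((Perm.swap y b B).trans ((perm_append_singleton b B).symm.cons y))

lemma listOT_dist_append_singleton [PseudoMetricSpace α] (z : α) {X Y : List α}
    (hlen : X.length = Y.length) :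
    listOT dist (X ++ [z]) (Y ++ [z]) = listOT dist X Y := by
  apply le_antisymm
  · refine le_listOT fun Y' hY' => ?_
    calc listOT dist (X ++ [z]) (Y ++ [z])
        ≤ (zipWith dist (X ++ [z]) (Y' ++ [z])).sum := listOT_le (hY'.append_right [z])
      _ = (zipWith dist X Y').sum := by
        simp [sum_zipWith_append_singleton dist (hlen.trans hY'.length_eq)]
  · refine le_listOT fun Y'' hY'' => ?_
    obtain ⟨Y', hY', hle⟩ := exists_perm_sum_zipWith_dist_le z hlen hY''
    exact (listOT_le hY').trans hle

lemma listOT_dist_append [PseudoMetricSpace α] {X Y : List α} (hlen : X.length = Y.length)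
    (Z : List α) : listOT dist (X ++ Z) (Y ++ Z) = listOT dist X Y := by
  induction Z using reverseRecOn with
  | nil => simp
  | append_singleton Z z ih =>
    rw [← append_assoc, ← append_assoc,
      listOT_dist_append_singleton z (by simp [hlen]), ih]

end ListOT

/-- Augmenting both equal-cardinality multisets with `n` copies of the blank
element `𝟘` leaves the unnormalized OT cost unchanged. -/
theorem listOT_append_replicate_blank {α : Type*} [MetricSpace α] (b : α)
    (X Y : List α) (hlen : X.length = Y.length) (n : ℕ) :
    listOT dist (X ++ List.replicate n b) (Y ++ List.replicate n b) =
      listOT dist X Y :=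
  ListOT.listOT_dist_append hlen _

end
end

section
/- If d is a pseudometric on a space S, then the unnormalized optimal transport cost with blank augmentation, defined on finite multisets of S by OT_d(ρ(X,Y)) where ρ pads the smaller multiset with copies of a fixed element 𝟘 until both have equal cardinality, satisfies the triangle inequality: OT_d(ρ(X,Y)) ≤ OT_d(ρ(X,Z)) + OT_d(ρ(Z,Y)) for all finite multisets X, Y, Z. -/
/-!
Read `listOT` as the least cost of a matching, a list of pairs whose two projections are the
two lists up to order. Optimal matchings of `X` with `Z` and of `Z` with `Y` compose to one of
`X` with `Y`, so `listOT dist` satisfies the triangle inequality on lists of equal length.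
Adding the blank `b` to both sides does not change `listOT dist`: in an optimal matching either
`b` is matched to itself at cost `0`, or `b ↦ y` and `a ↦ b`, and rerouting to `a ↦ y` costs
no more by the triangle inequality. So each of the three padded costs equals `listOT dist` after
padding all of `X`, `Y`, `Z` to a common length, where the equal-length inequality applies.
-/

open scoped BigOperators

noncomputable section

theorem List.exists_perm_map_eq_of_perm {β γ : Type*} (f : β → γ) {M : List β} {X : List γ}
    (h : (M.map f).Perm X) : ∃ M' : List β, M'.Perm M ∧ M'.map f = X := by
  obtain ⟨M', hX, hM'⟩ : Relation.Comp (· = List.map f ·) List.Perm X M := by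
    rw [List.eq_map_comp_perm]
    exact h.symm
  exact ⟨M', hM', hX.symm⟩

section Matching

variable {α : Type*}

/-- A bijective matching between the multisets `X` and `Y`, as the list of its matched pairs. -/
def IsMatching (M : List (α × α)) (X Y : List α) : Prop :=
  (M.map Prod.fst).Perm X ∧ (M.map Prod.snd).Perm Y

def matchingCost (d : α → α → ℝ) (M : List (α × α)) : ℝ :=
  (M.map (Function.uncurry d)).sum

theorem matchingCost_cons (d : α → α → ℝ) (p : α × α) (M : List (α × α)) :
    matchingCost d (p :: M) = d p.1 p.2 + matchingCost d M := by
  simp [matchingCost, Function.uncurry]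

theorem List.Perm.matchingCost_eq (d : α → α → ℝ) {M M' : List (α × α)} (h : M.Perm M') :
    matchingCost d M = matchingCost d M' :=
  (h.map _).sum_eq

theorem IsMatching.of_perm {M M' : List (α × α)} {X Y : List α} (h : IsMatching M X Y)
    (hM : M'.Perm M) : IsMatching M' X Y :=
  ⟨(hM.map _).trans h.1, (hM.map _).trans h.2⟩

theorem isMatching_cons_iff (x y : α) {M : List (α × α)} {X Y : List α} :
    IsMatching ((x, y) :: M) (x :: X) (y :: Y) ↔ IsMatching M X Y := by
  simp only [IsMatching, List.map_cons, List.perm_cons]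

theorem finite_listOT_costs (d : α → α → ℝ) (X Y : List α) :
    {c : ℝ | ∃ Y' : List α, Y.Perm Y' ∧ c = (List.zipWith d X Y').sum}.Finite :=
  (Y.permutations.map fun Y' => (List.zipWith d X Y').sum).finite_toSet.subset
    fun _ ⟨Y', hY', hc⟩ => List.mem_map.2 ⟨Y', List.mem_permutations.2 hY'.symm, hc.symm⟩

theorem listOT_le_matchingCost (d : α → α → ℝ) {M : List (α × α)} {X Y : List α}
    (hM : IsMatching M X Y) : listOT d X Y ≤ matchingCost d M := by
  obtain ⟨M', hM'M, rfl⟩ := List.exists_perm_map_eq_of_perm Prod.fst hM.1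
  refine csInf_le (finite_listOT_costs d _ Y).bddBelow
    ⟨M'.map Prod.snd, ((hM'M.map _).trans hM.2).symm, ?_⟩
  rw [← hM'M.matchingCost_eq, List.zipWith_map, List.zipWith_self]
  rfl

theorem exists_isMatching_matchingCost_eq_listOT (d : α → α → ℝ) {X Y : List α}
    (h : X.length = Y.length) : ∃ M, IsMatching M X Y ∧ matchingCost d M = listOT d X Y := by
  obtain ⟨Y', hY', hcost⟩ :=
    Set.Nonempty.csInf_mem (by exact ⟨_, Y, List.Perm.refl Y, rfl⟩) (finite_listOT_costs d X Y)
  have hlen : X.length = Y'.length := h.trans hY'.length_eq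
  refine ⟨X.zip Y', ⟨?_, ?_⟩, ?_⟩
  · rw [List.map_fst_zip hlen.le]
  · rw [List.map_snd_zip hlen.ge]
    exact hY'.symm
  · rw [listOT, hcost, matchingCost, List.map_uncurry_zip_eq_zipWith]

theorem listOT_le_of_perm (d : α → α → ℝ) {X Y X' Y' : List α} (h : X.length = Y.length)
    (hX : X.Perm X') (hY : Y.Perm Y') : listOT d X' Y' ≤ listOT d X Y := by
  obtain ⟨M, hM, hcost⟩ := exists_isMatching_matchingCost_eq_listOT d h
  exact hcost ▸ listOT_le_matchingCost d ⟨hM.1.trans hX, hM.2.trans hY⟩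

theorem listOT_congr_perm (d : α → α → ℝ) {X Y X' Y' : List α} (h : X.length = Y.length)
    (hX : X.Perm X') (hY : Y.Perm Y') : listOT d X Y = listOT d X' Y' :=
  le_antisymm
    (listOT_le_of_perm d (by rw [← hX.length_eq, ← hY.length_eq, h]) hX.symm hY.symm)
    (listOT_le_of_perm d h hX hY)

end Matching

section PseudoMetric

variable {α : Type*} [PseudoMetricSpace α]

theorem exists_matchingCost_comp_le :
    ∀ {M N : List (α × α)}, M.map Prod.snd = N.map Prod.fst →
      ∃ K : List (α × α), K.map Prod.fst = M.map Prod.fst ∧ K.map Prod.snd = N.map Prod.snd ∧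
        matchingCost dist K ≤ matchingCost dist M + matchingCost dist N
  | [], [], _ => ⟨[], rfl, rfl, by simp [matchingCost]⟩
  | (x, z) :: M, (z', y) :: N, h => by
    simp only [List.map_cons, List.cons.injEq] at h
    obtain ⟨rfl, h⟩ := h
    obtain ⟨K, hK₁, hK₂, hK⟩ := exists_matchingCost_comp_le h
    refine ⟨(x, y) :: K, by simp [hK₁], by simp [hK₂], ?_⟩
    simp only [matchingCost_cons]
    linarith [dist_triangle x z y]

theorem listOT_triangle {X Y Z : List α} (hXZ : X.length = Z.length)
    (hZY : Z.length = Y.length) :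
    listOT dist X Y ≤ listOT dist X Z + listOT dist Z Y := by
  obtain ⟨M, hM, hMcost⟩ := exists_isMatching_matchingCost_eq_listOT dist hXZ
  obtain ⟨N, hN, hNcost⟩ := exists_isMatching_matchingCost_eq_listOT dist hZY
  obtain ⟨N', hN'N, hN'⟩ := List.exists_perm_map_eq_of_perm Prod.fst (hN.1.trans hM.2.symm)
  obtain ⟨K, hK₁, hK₂, hK⟩ := exists_matchingCost_comp_le hN'.symm
  calc listOT dist X Y ≤ matchingCost dist K :=
        listOT_le_matchingCost dist ⟨hK₁ ▸ hM.1, hK₂ ▸ (hN'N.map _).trans hN.2⟩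
    _ ≤ matchingCost dist M + matchingCost dist N' := hK
    _ = listOT dist X Z + listOT dist Z Y := by rw [hN'N.matchingCost_eq, hMcost, hNcost]

theorem listOT_le_listOT_cons_cons (b : α) {A B : List α} (h : A.length = B.length) :
    listOT dist A B ≤ listOT dist (b :: A) (b :: B) := by
  obtain ⟨M, hM, hcost⟩ :=
    exists_isMatching_matchingCost_eq_listOT dist (X := b :: A) (Y := b :: B) (by simp [h])
  rw [← hcost]
  classical
  by_cases hbb : (b, b) ∈ M
  · have hMperm := List.perm_cons_erase hbb
    have hE := (isMatching_cons_iff b b).1 (hM.of_perm hMperm.symm)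
    calc listOT dist A B ≤ matchingCost dist (M.erase (b, b)) := listOT_le_matchingCost dist hE
      _ = matchingCost dist M := by
        rw [hMperm.matchingCost_eq, matchingCost_cons, dist_self, zero_add]
  · obtain ⟨y, hy⟩ : ∃ y, (b, y) ∈ M := by simpa using hM.1.mem_iff.2 List.mem_cons_self
    obtain ⟨a, ha⟩ : ∃ a, (a, b) ∈ M := by simpa using hM.2.mem_iff.2 List.mem_cons_self
    have ha' : (a, b) ∈ M.erase (b, y) :=
      (List.mem_erase_of_ne fun hab => hbb (by simp_all)).2 ha
    set E := (M.erase (b, y)).erase (a, b)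
    have hMperm : M.Perm ((b, y) :: (a, b) :: E) :=
      (List.perm_cons_erase hy).trans ((List.perm_cons_erase ha').cons _)
    have hbyabE := hM.of_perm hMperm.symm
    have hE : IsMatching ((a, y) :: E) A B := by
      refine ⟨(List.perm_cons b).1 hbyabE.1, (List.perm_cons b).1 ?_⟩
      exact (List.Perm.swap y b _).trans hbyabE.2
    calc listOT dist A B ≤ matchingCost dist ((a, y) :: E) := listOT_le_matchingCost dist hE
      _ ≤ matchingCost dist ((b, y) :: (a, b) :: E) := by
        simp only [matchingCost_cons]
        linarith [dist_triangle a b y, dist_comm a b]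
      _ = matchingCost dist M := (hMperm.matchingCost_eq dist).symm

theorem listOT_cons_cons_self (b : α) {A B : List α} (h : A.length = B.length) :
    listOT dist (b :: A) (b :: B) = listOT dist A B := by
  refine le_antisymm ?_ (listOT_le_listOT_cons_cons b h)
  obtain ⟨M, hM, hcost⟩ := exists_isMatching_matchingCost_eq_listOT dist h
  calc listOT dist (b :: A) (b :: B) ≤ matchingCost dist ((b, b) :: M) :=
        listOT_le_matchingCost dist ((isMatching_cons_iff b b).2 hM)
    _ = listOT dist A B := by rw [matchingCost_cons, dist_self, zero_add, hcost]

theorem listOT_append_replicate_self (b : α) {A B : List α} (h : A.length = B.length) (k : ℕ) :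
    listOT dist (A ++ List.replicate k b) (B ++ List.replicate k b) = listOT dist A B := by
  rw [listOT_congr_perm dist (by simp [h]) List.perm_append_comm List.perm_append_comm]
  induction k with
  | zero => simp
  | succ k ih =>
    rw [List.replicate_succ, List.cons_append, List.cons_append,
      listOT_cons_cons_self b (by simp [h]), ih]

theorem otPad_dist_eq_listOT (b : α) {X Y : List α} {L : ℕ} (hX : X.length ≤ L)
    (hY : Y.length ≤ L) :
    otPad dist b X Y =
      listOT dist (X ++ List.replicate (L - X.length) b) (Y ++ List.replicate (L - Y.length) b) := by
  have split : ∀ U : List α, U.length ≤ max X.length Y.length → max X.length Y.length ≤ L →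
      U ++ List.replicate (L - U.length) b =
        U ++ List.replicate (max X.length Y.length - U.length) b ++
          List.replicate (L - max X.length Y.length) b := by
    intro U hU hL
    rw [List.append_assoc, ← List.replicate_add]
    congr 2
    omega
  rw [split X (le_max_left _ _) (max_le hX hY), split Y (le_max_right _ _) (max_le hX hY),
    listOT_append_replicate_self b (by simp)]
  simp only [otPad, pad]
  congr 3 <;> omega

end PseudoMetric

/-- Triangle inequality for blank-augmented unnormalized OT over a pseudometric
ground cost. -/
theorem otPad_triangle {α : Type*} [PseudoMetricSpace α] (b : α)
    (X Y Z : List α) :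
    otPad dist b X Y ≤ otPad dist b X Z + otPad dist b Z Y := by
  set L := max (max X.length Y.length) Z.length
  have hX : X.length ≤ L := by omega
  have hY : Y.length ≤ L := by omega
  have hZ : Z.length ≤ L := by omega
  rw [otPad_dist_eq_listOT b hX hY, otPad_dist_eq_listOT b hX hZ, otPad_dist_eq_listOT b hZ hY]
  exact listOT_triangle (by simp; omega) (by simp; omega)

end
end

section
/- If d is a metric on S and no multiset contains the blank element 𝟘, then OT_d(ρ(X,Y)) = 0 implies X = Y as multisets. -/
open scoped BigOperators

noncomputable section

lemma sum_zero_of_nonneg : ∀ (l : List ℝ), (∀ x ∈ l, 0 ≤ x) → l.sum = 0 → ∀ x ∈ l, x = 0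
  | [], _, _, x, hx => by simp at hx
  | a :: l, hnn, hs, x, hx => by
      have ha : 0 ≤ a := hnn a (by simp)
      have hl : 0 ≤ l.sum := List.sum_nonneg fun y hy => hnn y (by simp [hy])
      have hs' : a + l.sum = 0 := by simpa using hs
      have ha0 : a = 0 := le_antisymm (by linarith) ha
      have hl0 : l.sum = 0 := by linarith
      rcases List.mem_cons.1 hx with rfl | hx
      · exact ha0
      · exact sum_zero_of_nonneg l (fun y hy => hnn y (by simp [hy])) hl0 x hx

/-- If `d` is a metric and neither multiset contains the blank element `𝟘`, then
vanishing blank-augmented unnormalized OT cost implies equality as multisets. -/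
theorem otPad_eq_zero_imp_perm {α : Type*} [MetricSpace α] (b : α)
    (X Y : List α) (hX : b ∉ X) (hY : b ∉ Y)
    (h : otPad dist b X Y = 0) : X.Perm Y := by
  set X' := X ++ List.replicate (Y.length - X.length) b with hX'
  set Y' := Y ++ List.replicate (X.length - Y.length) b with hY'
  have hlen : X'.length = Y'.length := by
    simp [hX', hY']; omega
  set S₀ : Set ℝ := {c : ℝ | ∃ Z : List α, Y'.Perm Z ∧ c = (List.zipWith dist X' Z).sum}
    with hS₀
  have hfin : S₀.Finite := by
    have : S₀ ⊆ (fun Z : List α => (List.zipWith dist X' Z).sum) '' {Z | Z ∈ Y'.permutations} := by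
      rintro c ⟨Z, hZ, rfl⟩
      exact ⟨Z, by simpa [List.mem_permutations] using hZ.symm, rfl⟩
    exact Set.Finite.subset ((Y'.permutations.finite_toSet).image _) this
  have hne : S₀.Nonempty := ⟨_, Y', List.Perm.refl _, rfl⟩
  have hmem : sInf S₀ ∈ S₀ := hne.csInf_mem hfin
  have h0 : (0 : ℝ) ∈ S₀ := by
    have : sInf S₀ = 0 := h
    rwa [this] at hmem
  obtain ⟨Z, hZperm, hZsum⟩ := h0
  have hlenZ : X'.length = Z.length := hlen.trans hZperm.length_eq
  have hnn : ∀ x ∈ List.zipWith dist X' Z, 0 ≤ x := by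
    intro x hx
    obtain ⟨i, hi, rfl⟩ := List.mem_iff_getElem.1 hx
    rw [List.getElem_zipWith]
    exact dist_nonneg
  have hall : ∀ x ∈ List.zipWith dist X' Z, x = 0 :=
    sum_zero_of_nonneg _ hnn hZsum.symm
  have hXZ : X' = Z := by
    apply List.ext_getElem hlenZ
    intro i h1 h2
    have hiz : i < (List.zipWith dist X' Z).length := by
      simp [List.length_zipWith]; omega
    have := hall _ (List.getElem_mem hiz)
    rw [List.getElem_zipWith] at this
    exact dist_eq_zero.mp this
  have hperm : X'.Perm Y' := (hXZ ▸ hZperm).symm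
  -- counts of b
  classical
  have hcount : List.count b X' = List.count b Y' := hperm.count_eq b
  have hcX : List.count b X = 0 := List.count_eq_zero_of_not_mem hX
  have hcY : List.count b Y = 0 := List.count_eq_zero_of_not_mem hY
  have hk : Y.length - X.length = X.length - Y.length := by
    have := hcount
    simp [hX', hY', List.count_append, List.count_replicate, hcX, hcY] at this
    omega
  rw [hX', hY', hk] at hperm
  exact (List.perm_append_right_iff _).1 hperm

end
end
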